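/- arXiv:2409.15298 — 3 statements merged into one kernel-verified Lean document; each statement's English description precedes it below -/
import Mathlib

section
/- For all z ∈ ℝⁿ and all indices i, (1/(2√2)) · F₂(z)_i ≤ PTsoftmax(z)_i ≤ 2√2 · F₂(z)_i, where PTsoftmax(z)_i = 2^{⌈z_i⌉ - k} with k = ⌈log₂(∑_j 2^{z_j})⌉. -/
/-!
Rounding an exponent up to the next integer multiplies `2 ^ x` by a factor in `[1, 2]`, and
`2 ^ ⌈log₂ S⌉` is a rounding of `S` of the same kind. Hence the numerator of `PTsoftmax(z)_i`
overestimates `2 ^ {z_i}` and its denominator overestimates `∑ⱼ 2 ^ {z_j}`, each by at most a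
factor `2`, so the quotient is within a factor `2 ≤ 2√2` of `F₂(z)_i` in both directions.
-/

open Real

namespace Real

variable {b : ℝ}

theorem rpow_le_rpow_intCeil (hb : 1 ≤ b) (x : ℝ) : b ^ x ≤ b ^ (⌈x⌉ : ℝ) :=
  rpow_le_rpow_of_exponent_le hb (Int.le_ceil x)

theorem rpow_intCeil_le_mul_rpow (hb : 1 ≤ b) (x : ℝ) : b ^ (⌈x⌉ : ℝ) ≤ b * b ^ x :=
  calc b ^ (⌈x⌉ : ℝ) ≤ b ^ (x + 1) := rpow_le_rpow_of_exponent_le hb (Int.ceil_lt_add_one x).le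
    _ = b * b ^ x := by rw [rpow_add (by linarith), rpow_one, mul_comm]

variable {S : ℝ}

theorem le_rpow_ceil_logb (hb : 1 < b) (hS : 0 < S) : S ≤ b ^ (⌈logb b S⌉ : ℝ) := by
  simpa only [rpow_logb (by linarith) hb.ne' hS] using rpow_le_rpow_intCeil hb.le (logb b S)

theorem rpow_ceil_logb_le_mul (hb : 1 < b) (hS : 0 < S) : b ^ (⌈logb b S⌉ : ℝ) ≤ b * S := by
  simpa only [rpow_logb (by linarith) hb.ne' hS] using rpow_intCeil_le_mul_rpow hb.le (logb b S)

end Real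

theorem ptsoftmax_approx_base2_softmax_general (n : ℕ) (z : Fin n → ℝ)
    (k : ℤ) (hk : k = ⌈Real.logb 2 (∑ j, (2 : ℝ) ^ (z j))⌉)
    (F PT : Fin n → ℝ)
    (hF : ∀ i, F i = (2 : ℝ) ^ (z i) / ∑ j, (2 : ℝ) ^ (z j))
    (hPT : ∀ i, PT i = (2 : ℝ) ^ (⌈z i⌉ - k)) :
    ∀ i, (1 / (2 * Real.sqrt 2)) * F i ≤ PT i ∧ PT i ≤ 2 * Real.sqrt 2 * F i := by
  intro i
  set S := ∑ j, (2 : ℝ) ^ (z j)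
  have hS : 0 < S := Finset.sum_pos (fun j _ => by positivity) ⟨i, Finset.mem_univ i⟩
  have hSk : S ≤ 2 ^ (k : ℝ) := hk ▸ le_rpow_ceil_logb one_lt_two hS
  have hkS : (2 : ℝ) ^ (k : ℝ) ≤ 2 * S := hk ▸ rpow_ceil_logb_le_mul one_lt_two hS
  have hPTi : PT i = 2 ^ (⌈z i⌉ : ℝ) / 2 ^ (k : ℝ) := by
    rw [hPT, ← rpow_intCast, Int.cast_sub, rpow_sub two_pos]
  have hlo : F i / 2 ≤ PT i := by
    rw [hPTi, hF, div_div, mul_comm]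
    exact div_le_div₀ (by positivity) (rpow_le_rpow_intCeil one_le_two _) (by positivity) hkS
  have hup : PT i ≤ 2 * F i := by
    rw [hPTi, hF, mul_div_assoc']
    exact div_le_div₀ (by positivity) (rpow_intCeil_le_mul_rpow one_le_two _) hS hSk
  have hF0 : 0 ≤ F i := by rw [hF]; positivity
  have hsqrt : 1 ≤ √2 := one_le_sqrt.mpr one_le_two
  constructor
  · calc 1 / (2 * √2) * F i ≤ F i / 2 := by
          rw [one_div_mul_eq_div]; exact div_le_div_of_nonneg_left hF0 two_pos (by linarith)
      _ ≤ PT i := hlo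
  · calc PT i ≤ 2 * F i := hup
      _ ≤ 2 * √2 * F i := by nlinarith

theorem ptsoftmax_approx_base2_softmax (n : ℕ) (hn : 1 ≤ n) (z : Fin n → ℝ)
    (k : ℤ) (hk : k = ⌈Real.logb 2 (∑ j, (2 : ℝ) ^ (z j))⌉)
    (F PT : Fin n → ℝ)
    (hF : ∀ i, F i = (2 : ℝ) ^ (z i) / ∑ j, (2 : ℝ) ^ (z j))
    (hPT : ∀ i, PT i = (2 : ℝ) ^ (⌈z i⌉ - k)) :
    ∀ i, (1 / (2 * Real.sqrt 2)) * F i ≤ PT i ∧ PT i ≤ 2 * Real.sqrt 2 * F i :=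
  ptsoftmax_approx_base2_softmax_general n z k hk F PT hF hPT
end

section
/- For z ∈ ℝⁿ with k = ⌈log₂(∑_j 2^{z_j})⌉, the total mass of PTsoftmax satisfies 1/2 < ∑_i 2^{⌈z_i⌉ - k} < 4; in particular the PTsoftmax outputs sum to a quantity bounded by universal constants independent of n and z. -/
/-! Write `S = ∑ j, 2 ^ z j`, so that `k` is the least integer with `S ≤ 2 ^ k`, whence
`2 ^ (k - 1) < S ≤ 2 ^ k`. Rounding each exponent up multiplies each term by a factor in `[1, 2)`,
so `S ≤ ∑ i, 2 ^ ⌈z i⌉ < 2 S`. Dividing by `2 ^ k` puts the total mass in `(1/2, 2)`. -/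

open Finset Real

section CeilExponent

variable {b : ℝ}

lemma rpow_le_zpow_ceil (hb : 1 ≤ b) (x : ℝ) : b ^ x ≤ b ^ ⌈x⌉ := by
  rw [← rpow_intCast]
  exact rpow_le_rpow_of_exponent_le hb (Int.le_ceil x)

lemma zpow_ceil_lt_mul_rpow (hb : 1 < b) (x : ℝ) : b ^ ⌈x⌉ < b * b ^ x := by
  rw [← rpow_intCast, mul_comm, ← rpow_add_one (by positivity)]
  exact rpow_lt_rpow_of_exponent_lt hb (Int.ceil_lt_add_one x)

variable {ι : Type*} [Fintype ι]

lemma sum_rpow_le_sum_zpow_ceil (hb : 1 ≤ b) (z : ι → ℝ) :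
    ∑ i, b ^ z i ≤ ∑ i, b ^ ⌈z i⌉ :=
  sum_le_sum fun i _ => rpow_le_zpow_ceil hb (z i)

lemma sum_zpow_ceil_lt_mul_sum_rpow [Nonempty ι] (hb : 1 < b) (z : ι → ℝ) :
    ∑ i, b ^ ⌈z i⌉ < b * ∑ i, b ^ z i := by
  rw [mul_sum]
  exact sum_lt_sum_of_nonempty univ_nonempty fun i _ => zpow_ceil_lt_mul_rpow hb (z i)

end CeilExponent

lemma sum_zpow_ceil_sub_clog_mem_Ioo {ι : Type*} [Fintype ι] [Nonempty ι] {b : ℕ} (hb : 1 < b)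
    (z : ι → ℝ) {k : ℤ} (hk : k = Int.clog b (∑ j, (b : ℝ) ^ z j)) :
    ∑ i, (b : ℝ) ^ (⌈z i⌉ - k) ∈ Set.Ioo (b : ℝ)⁻¹ b := by
  set S := ∑ j, (b : ℝ) ^ z j
  have hb' : (1 : ℝ) < b := by exact_mod_cast hb
  have hb0 : (0 : ℝ) < b := by positivity
  have hS : 0 < S := sum_pos (fun j _ => by positivity) univ_nonempty
  have hbk : (0 : ℝ) < (b : ℝ) ^ k := by positivity
  have hS_lower : (b : ℝ) ^ k < S * b := by
    have := Int.zpow_pred_clog_lt_self hb hS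
    rwa [zpow_sub_one₀ hb0.ne', mul_inv_lt_iff₀ hb0, ← hk] at this
  have hS_upper : S ≤ (b : ℝ) ^ k := hk ▸ Int.self_le_zpow_clog hb S
  have hmass : ∑ i, (b : ℝ) ^ (⌈z i⌉ - k) = (∑ i, (b : ℝ) ^ ⌈z i⌉) / (b : ℝ) ^ k := by
    simp only [zpow_sub₀ hb0.ne', sum_div]
  have hlow := sum_rpow_le_sum_zpow_ceil hb'.le z
  have hhigh := sum_zpow_ceil_lt_mul_sum_rpow hb' z
  rw [Set.mem_Ioo, hmass, lt_div_iff₀ hbk, div_lt_iff₀ hbk, inv_mul_lt_iff₀ hb0]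
  constructor <;> nlinarith

theorem ptsoftmax_mass_bounds (n : ℕ) (hn : 1 ≤ n) (z : Fin n → ℝ)
    (k : ℤ) (hk : k = ⌈Real.logb 2 (∑ j, (2 : ℝ) ^ (z j))⌉) :
    1 / 2 < ∑ i, (2 : ℝ) ^ (⌈z i⌉ - k) ∧ ∑ i, (2 : ℝ) ^ (⌈z i⌉ - k) < 4 := by
  have : Nonempty (Fin n) := ⟨⟨0, hn⟩⟩
  have hk' : k = Int.clog 2 (∑ j, ((2 : ℕ) : ℝ) ^ z j) := by
    rw [hk, ← Real.ceil_logb_natCast (by positivity), Nat.cast_ofNat]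
  obtain ⟨hlow, hhigh⟩ := sum_zpow_ceil_sub_clog_mem_Ioo one_lt_two z hk'
  rw [Nat.cast_ofNat] at hlow hhigh
  constructor <;> linarith
end

section
/- For the maximum-logit index i* = argmax_i z_i of z ∈ ℝⁿ, PTsoftmax(z)_{i*} = 2^{⌈z_{i*}⌉ − k} ≥ 1/(4n); i.e., the approximate softmax assigns the top logit at least probability 1/(4n). -/
/-!
Rounding the top logit up only increases `2 ^ z i`, which is already at least the average
`S / n` of the terms of `S = ∑ j, 2 ^ z j`, while rounding `log₂ S` up costs at most a
factor `2`. Hence the top entry is at least `(S / n) / (2 S) = 1 / (2n)`.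
-/

namespace Real

theorem rpow_le_zpow_ceil {b : ℝ} (hb : 1 ≤ b) (x : ℝ) : b ^ x ≤ b ^ ⌈x⌉ := by
  rw [← rpow_intCast]
  exact rpow_le_rpow_of_exponent_le hb (Int.le_ceil x)

theorem zpow_ceil_logb_lt {b x : ℝ} (hb : 1 < b) (hx : 0 < x) :
    b ^ ⌈logb b x⌉ < b * x := by
  calc b ^ ⌈logb b x⌉ = b ^ (⌈logb b x⌉ : ℝ) := (rpow_intCast b _).symm
    _ < b ^ (logb b x + 1) := rpow_lt_rpow_of_exponent_lt hb (Int.ceil_lt_add_one _)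
    _ = b * x := by
      rw [rpow_add_one (by positivity), rpow_logb (by positivity) hb.ne' hx, mul_comm]

end Real

theorem Finset.sum_rpow_le_card_mul_rpow {ι : Type*} (s : Finset ι) {b : ℝ} (hb : 1 ≤ b)
    {z : ι → ℝ} {m : ℝ} (hm : ∀ j ∈ s, z j ≤ m) :
    ∑ j ∈ s, b ^ z j ≤ s.card * b ^ m := by
  simpa using s.sum_le_card_nsmul _ _ fun j hj ↦ Real.rpow_le_rpow_of_exponent_le hb (hm j hj)

theorem ptsoftmax_argmax_lower_bound_general (n : ℕ) (z : Fin n → ℝ)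
    (k : ℤ) (hk : k = ⌈Real.logb 2 (∑ j, (2 : ℝ) ^ (z j))⌉)
    (i : Fin n) (hi : ∀ j, z j ≤ z i) :
    (1 : ℝ) / (4 * n) ≤ (2 : ℝ) ^ (⌈z i⌉ - k) := by
  set S := ∑ j, (2 : ℝ) ^ (z j)
  have hn : (0 : ℝ) < n := Nat.cast_pos.mpr (Fin.pos i)
  have hS : 0 < S := Finset.sum_pos (fun j _ ↦ by positivity) ⟨i, Finset.mem_univ i⟩
  have hS_le : S ≤ n * 2 ^ z i := by
    simpa using Finset.univ.sum_rpow_le_card_mul_rpow one_le_two fun j _ ↦ hi j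
  have hk_lt : (2 : ℝ) ^ k < 2 * S := hk ▸ Real.zpow_ceil_logb_lt one_lt_two hS
  calc (1 : ℝ) / (4 * n) ≤ (S / n) / (2 * S) := by
        rw [div_div, div_le_div_iff₀ (by positivity) (by positivity)]
        nlinarith
    _ ≤ 2 ^ ⌈z i⌉ / 2 ^ k := by
        refine div_le_div₀ (by positivity) ?_ (by positivity) hk_lt.le
        exact ((div_le_iff₀' hn).mpr hS_le).trans (Real.rpow_le_zpow_ceil one_le_two _)
    _ = 2 ^ (⌈z i⌉ - k) := (zpow_sub₀ two_ne_zero _ _).symm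

theorem ptsoftmax_argmax_lower_bound (n : ℕ) (hn : 1 ≤ n) (z : Fin n → ℝ)
    (k : ℤ) (hk : k = ⌈Real.logb 2 (∑ j, (2 : ℝ) ^ (z j))⌉)
    (i : Fin n) (hi : ∀ j, z j ≤ z i) :
    (1 : ℝ) / (4 * n) ≤ (2 : ℝ) ^ (⌈z i⌉ - k) :=
  ptsoftmax_argmax_lower_bound_general n z k hk i hi
end
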